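/- If A is a unitary symmetric complex n×n matrix (A* A = I and Aᵀ = A), then there exists a unitary matrix B such that A = B Bᵀ. -/

import Mathlib

/-! A unitary matrix is normal with finite spectrum on the unit circle, so a polynomial `p`
interpolating a square root on the spectrum gives, through the functional calculus, a unitary
`B = p(A)` with `B * B = A`. Being a polynomial in the symmetric matrix `A`, `B` is symmetric,
hence `A = B * Bᵀ`. -/

open Matrix Polynomial

theorem Polynomial.exists_eval_eq_of_finite {K : Type*} [Field K] {s : Set K} (hs : s.Finite)
    (f : K → K) : ∃ p : K[X], ∀ x ∈ s, p.eval x = f x := by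
  classical
  exact ⟨Lagrange.interpolate hs.toFinset id f, fun _ hx =>
    Lagrange.eval_interpolate_at_node f (Set.injOn_id _) (hs.mem_toFinset.mpr hx)⟩

theorem Matrix.transpose_aeval {n R α : Type*} [Fintype n] [DecidableEq n] [CommSemiring R]
    [CommSemiring α] [Algebra R α] (A : Matrix n n α) (p : R[X]) :
    (aeval A p)ᵀ = aeval Aᵀ p :=
  MulOpposite.op_injective <| by
    simpa [aeval_op_apply] using (aeval_algHom_apply (transposeAlgEquiv n R α) A p).symm

theorem Complex.mem_unitary_of_sq_mem_unitary {w : ℂ} (hw : w ^ 2 ∈ unitary ℂ) :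
    w ∈ unitary ℂ := by
  rw [Unitary.mem_iff_star_mul_self] at hw ⊢
  have : ‖w‖ = 1 := by
    refine (pow_eq_one_iff_of_nonneg (norm_nonneg w) four_ne_zero).mp ?_
    simpa [← pow_add] using congrArg norm hw
  rw [RCLike.star_def, Complex.conj_mul', this]
  norm_num

section UnitarySqrt

variable {A : Type*} [TopologicalSpace A] [Ring A] [StarRing A] [Algebra ℂ A]
  [ContinuousFunctionalCalculus ℂ A IsStarNormal]

theorem exists_aeval_mem_unitary_mul_self_eq {u : A} (hu : u ∈ unitary A)
    (hfin : (spectrum ℂ u).Finite) :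
    ∃ p : ℂ[X], aeval u p ∈ unitary A ∧ aeval u p * aeval u p = u := by
  obtain ⟨p, hp⟩ := exists_eval_eq_of_finite hfin (· ^ (2⁻¹ : ℂ))
  have : IsStarNormal u := isStarNormal_of_mem_unitary hu
  refine ⟨p, ?_, ?_⟩
  · rw [← cfc_polynomial p u, cfc_unitary_iff _ u]
    intro x hx
    rw [hp x hx]
    exact Unitary.star_mul_self_of_mem (Complex.mem_unitary_of_sq_mem_unitary <| by
      rw [Complex.cpow_ofNat_inv_pow]; exact spectrum_subset_unitary_of_mem_unitary hu hx)
  · rw [← cfc_polynomial p u, ← cfc_mul ..]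
    refine (cfc_congr fun x hx => ?_).trans (cfc_id' ℂ u)
    simp only [hp x hx, ← pow_two, Complex.cpow_ofNat_inv_pow]

end UnitarySqrt

open scoped Matrix.Norms.L2Operator in
theorem Matrix.exists_aeval_mem_unitaryGroup_mul_self_eq {n : Type*} [Fintype n] [DecidableEq n]
    {A : Matrix n n ℂ} (hA : A ∈ unitaryGroup n ℂ) :
    ∃ p : ℂ[X], aeval A p ∈ unitaryGroup n ℂ ∧ aeval A p * aeval A p = A :=
  exists_aeval_mem_unitary_mul_self_eq hA A.finite_spectrum

theorem takagi_unitary_symmetric (n : ℕ) (A : Matrix (Fin n) (Fin n) ℂ)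
    (hA : Aᴴ * A = 1) (hsym : Aᵀ = A) :
    ∃ B : Matrix (Fin n) (Fin n) ℂ, Bᴴ * B = 1 ∧ A = B * Bᵀ := by
  obtain ⟨p, hunit, hsq⟩ :=
    exists_aeval_mem_unitaryGroup_mul_self_eq (mem_unitaryGroup_iff'.mpr hA)
  refine ⟨aeval A p, mem_unitaryGroup_iff'.mp hunit, ?_⟩
  rw [transpose_aeval, hsym, hsq]
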